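/- Let f : ℤ_p → ℤ_p be a 1-Lipschitz bijection that is additive and also a homomorphism with respect to coordinate-wise AND (f(x AND y) = f(x) AND f(y)), where (x AND y)_k = (x_k · y_k) mod p on canonical digits. Then f is the identity map. -/

import Mathlib

/-!
The all-ones element `e = ∑ pᵏ = (1 - p)⁻¹` is a neutral element for the digit-wise AND.
Writing `e = f y` by surjectivity, `f y = f (y AND e) = f y AND f e = e AND f e = f e`,
so `f e = e`. A continuous additive map of `ℤ_[p]` is multiplication by `f 1`, since it is
determined by its values on the dense subset `ℕ`; as `e ≠ 0` in the domain `ℤ_[p]`, `f 1 = 1`.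
-/

/-- The `k`-th digit of the canonical `p`-adic expansion of `x`. -/
noncomputable def padicDigit (p : ℕ) [Fact p.Prime] (x : ℤ_[p]) (k : ℕ) : ℕ :=
  x.appr (k + 1) / p ^ k % p

/-- Coordinate-wise AND (digit-wise multiplication mod p) on `ℤ_[p]`. -/
noncomputable def pAnd (p : ℕ) [Fact p.Prime] (x y : ℤ_[p]) : ℤ_[p] :=
  ∑' k : ℕ, (((padicDigit p x k * padicDigit p y k) % p : ℕ) : ℤ_[p]) * (p : ℤ_[p]) ^ k

open Filter Topology

lemma DenseRange.eq_mul_of_continuous_of_map_add {R : Type*} [Ring R] [TopologicalSpace R]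
    [IsTopologicalRing R] [T2Space R] (hR : DenseRange (Nat.cast : ℕ → R)) {f : R → R}
    (hcont : Continuous f) (hadd : ∀ x y, f (x + y) = f x + f y) (x : R) : f x = f 1 * x := by
  have hnat : ∀ n : ℕ, f n = f 1 * n := by
    intro n
    induction n with
    | zero => simpa using hadd 0 0
    | succ n ih => rw [Nat.cast_succ, hadd, ih, mul_add_one]
  exact congrFun (hR.equalizer hcont (by fun_prop) (funext hnat)) x

namespace PadicInt

variable {p : ℕ} [hp : Fact p.Prime]

lemma padicDigit_lt (x : ℤ_[p]) (k : ℕ) : padicDigit p x k < p :=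
  Nat.mod_lt _ hp.out.pos

lemma appr_succ_eq_add_padicDigit (x : ℤ_[p]) (n : ℕ) :
    x.appr (n + 1) = x.appr n + padicDigit p x n * p ^ n := by
  obtain ⟨c, hc⟩ := x.dvd_appr_sub_appr n (n + 1) n.le_succ
  have hmono : x.appr n ≤ x.appr (n + 1) := x.appr_mono n.le_succ
  have hsucc : x.appr (n + 1) = x.appr n + p ^ n * c := by omega
  have hcp : c < p := by
    have hlt := x.appr_lt (n + 1)
    rw [pow_succ] at hlt
    exact Nat.lt_of_mul_lt_mul_left (by omega : p ^ n * c < p ^ n * p)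
  have hdigit : padicDigit p x n = c := by
    rw [padicDigit, hsucc, Nat.add_mul_div_left _ _ (pow_pos hp.out.pos n),
      Nat.div_eq_of_lt (x.appr_lt n), zero_add, Nat.mod_eq_of_lt hcp]
  rw [hdigit, hsucc, mul_comm]

lemma appr_eq_sum_padicDigit (x : ℤ_[p]) (n : ℕ) :
    x.appr n = ∑ k ∈ Finset.range n, padicDigit p x k * p ^ k := by
  induction n with
  | zero => simpa using x.appr_lt 0
  | succ n ih => rw [Finset.sum_range_succ, ← ih, appr_succ_eq_add_padicDigit]

lemma appr_eq_of_sub_mem_span {x : ℤ_[p]} {n m : ℕ} (hm : m < p ^ n)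
    (h : x - m ∈ Ideal.span {(p : ℤ_[p]) ^ n}) : x.appr n = m := by
  have hcongr := zmod_congr_of_sub_mem_span n x _ _ (appr_spec n x) h
  rwa [ZMod.natCast_eq_natCast_iff, Nat.ModEq, Nat.mod_eq_of_lt (x.appr_lt n),
    Nat.mod_eq_of_lt hm] at hcongr

lemma norm_p_lt_one : ‖(p : ℤ_[p])‖ < 1 := by
  rw [norm_p]
  exact inv_lt_one_of_one_lt₀ (mod_cast hp.out.one_lt)

variable (p) in
lemma tendsto_norm_p_pow :
    Tendsto (fun n : ℕ => ‖(p : ℤ_[p]) ^ n‖) atTop (𝓝 0) :=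
  tendsto_norm_zero.comp (tendsto_pow_atTop_nhds_zero_of_norm_lt_one norm_p_lt_one)

lemma tendsto_appr (x : ℤ_[p]) :
    Tendsto (fun n : ℕ => (x.appr n : ℤ_[p])) atTop (𝓝 x) := by
  refine tendsto_iff_norm_sub_tendsto_zero.2 <|
    squeeze_zero_norm (fun n => ?_) (tendsto_norm_p_pow p)
  rw [norm_norm, norm_sub_rev, norm_p_pow, norm_le_pow_iff_mem_span_pow]
  exact appr_spec n x

lemma summable_natCast_mul_p_pow (a : ℕ → ℕ) :
    Summable (fun k : ℕ => (a k : ℤ_[p]) * (p : ℤ_[p]) ^ k) := by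
  refine NonarchimedeanAddGroup.summable_of_tendsto_cofinite_zero ?_
  rw [Nat.cofinite_eq_atTop]
  refine squeeze_zero_norm (fun k => ?_) (tendsto_norm_p_pow p)
  rw [norm_mul]
  exact mul_le_of_le_one_left (norm_nonneg _) (norm_le_one _)

lemma hasSum_padicDigit (x : ℤ_[p]) :
    HasSum (fun k : ℕ => (padicDigit p x k : ℤ_[p]) * (p : ℤ_[p]) ^ k) x := by
  refine (summable_natCast_mul_p_pow _).hasSum_iff_tendsto_nat.2 ?_
  convert tendsto_appr x using 2 with n
  simp [appr_eq_sum_padicDigit]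

lemma pAnd_eq_right_of_padicDigit_eq_one {e : ℤ_[p]} (he : ∀ k, padicDigit p e k = 1)
    (y : ℤ_[p]) : pAnd p e y = y := by
  simp only [pAnd, he, one_mul, Nat.mod_eq_of_lt (padicDigit_lt y _)]
  exact (hasSum_padicDigit y).tsum_eq

lemma pAnd_eq_left_of_padicDigit_eq_one {e : ℤ_[p]} (he : ∀ k, padicDigit p e k = 1)
    (y : ℤ_[p]) : pAnd p y e = y := by
  simp only [pAnd, he, mul_one, Nat.mod_eq_of_lt (padicDigit_lt y _)]
  exact (hasSum_padicDigit y).tsum_eq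

variable (p) in
noncomputable def allOnes : ℤ_[p] :=
  ∑' k : ℕ, (p : ℤ_[p]) ^ k

lemma allOnes_ne_zero : allOnes p ≠ 0 :=
  left_ne_zero_of_mul_eq_one (geom_series_mul_neg _ norm_p_lt_one)

lemma appr_allOnes (n : ℕ) : (allOnes p).appr n = ∑ k ∈ Finset.range n, p ^ k := by
  refine appr_eq_of_sub_mem_span (Nat.geomSum_lt hp.out.two_le (by simp)) ?_
  have hsplit : ∑ k ∈ Finset.range n, (p : ℤ_[p]) ^ k + p ^ n * allOnes p = allOnes p := by
    have hsum := summable_geometric_of_norm_lt_one (norm_p_lt_one (p := p))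
    rw [allOnes, ← hsum.tsum_mul_left]
    simpa only [pow_add, mul_comm] using hsum.sum_add_tsum_nat_add n
  rw [Ideal.mem_span_singleton]
  exact ⟨allOnes p, by push_cast; linear_combination -hsplit⟩

lemma padicDigit_allOnes (k : ℕ) : padicDigit p (allOnes p) k = 1 := by
  have h := appr_succ_eq_add_padicDigit (allOnes p) k
  rw [appr_allOnes, appr_allOnes, Finset.sum_range_succ, add_right_inj] at h
  exact (Nat.eq_of_mul_eq_mul_right (pow_pos hp.out.pos k) (by rw [← h, one_mul])).symm

end PadicInt

open PadicInt in
theorem stmt_15 (p : ℕ) [Fact p.Prime] (f : ℤ_[p] → ℤ_[p])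
    (hlip : ∀ x y : ℤ_[p], ‖f x - f y‖ ≤ ‖x - y‖)
    (hadd : ∀ x y : ℤ_[p], f (x + y) = f x + f y)
    (hand : ∀ x y : ℤ_[p], f (pAnd p x y) = pAnd p (f x) (f y))
    (hbij : Function.Bijective f) :
    ∀ x : ℤ_[p], f x = x := by
  have hcont : Continuous f :=
    (LipschitzWith.of_dist_le' (K := 1) fun x y => by
      simpa [dist_eq_norm] using hlip x y).continuous
  have hlin := denseRange_natCast.eq_mul_of_continuous_of_map_add hcont hadd
  have hfix : f (allOnes p) = allOnes p := by
    obtain ⟨y, hy⟩ := hbij.surjective (allOnes p)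
    have h := hand y (allOnes p)
    rwa [pAnd_eq_left_of_padicDigit_eq_one padicDigit_allOnes, hy,
      pAnd_eq_right_of_padicDigit_eq_one padicDigit_allOnes, eq_comm] at h
  have hone : f 1 = 1 :=
    mul_right_cancel₀ allOnes_ne_zero (by rw [one_mul, ← hlin, hfix])
  intro x
  rw [hlin, hone, one_mul]
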